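/- W(2,7) > 604; that is, there exists a coloring c : {1,…,604} → {1,2} containing no monochromatic arithmetic progression of length 7. -/
import Mathlib

/-- `c` (viewed as a coloring of `{1,…,m}`) contains a monochromatic arithmetic
progression of length `l`: there are positive `a`, `d` with `a + (l-1)d ≤ m`
and `c (a) = c (a+d) = … = c (a+(l-1)d)`. -/
def ContainsAP (l m : ℕ) (c : ℕ → ℕ) : Prop :=
  ∃ a d : ℕ, 0 < a ∧ 0 < d ∧ a + (l - 1) * d ≤ m ∧
    ∀ j : ℕ, j ≤ l - 1 → c (a + j * d) = c a

/-- `c` is a coloring of `{1,…,m}` with colors in `{1,…,k}`. -/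
def IsColoring (k m : ℕ) (c : ℕ → ℕ) : Prop :=
  ∀ i : ℕ, 1 ≤ i → i ≤ m → 1 ≤ c i ∧ c i ≤ k

/-- The van der Waerden number `W k l`: the least positive `m` such that every
coloring of `{1,…,m}` with `k` colors contains a monochromatic arithmetic
progression of length `l`. -/
noncomputable def vdW (k l : ℕ) : ℕ :=
  sInf {m : ℕ | 0 < m ∧ ∀ c : ℕ → ℕ, IsColoring k m c → ContainsAP l m c}

/-! ### The witness coloring: quadratic residues mod 107, packed into a numeral -/

def vdwN : ℕ := 69270987961777909349930731192439998620250654239089456467900383512325973220840009519540124222224820120314964870773024124416225165216933620896833626505875441151583803416100838247595546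

/-- The witness coloring: bit `i` of `vdwN`, plus one. -/
def myc (i : ℕ) : ℕ := vdwN / 2 ^ i % 2 + 1

def fchk (a d : ℕ) : Bool :=
  decide (604 < a + 6 * d) ||
  !((myc (a + 1 * d) == myc a) && (myc (a + 2 * d) == myc a) && (myc (a + 3 * d) == myc a)
    && (myc (a + 4 * d) == myc a) && (myc (a + 5 * d) == myc a) && (myc (a + 6 * d) == myc a))

def allD : ℕ → ℕ → Bool
  | _, 0 => true
  | a, d + 1 => fchk a (d + 1) && allD a d

def allA : ℕ → Bool
  | 0 => true
  | a + 1 => allD (a + 1) 100 && allA a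

set_option maxRecDepth 100000 in
set_option maxHeartbeats 4000000 in
set_option exponentiation.threshold 1000 in
lemma allA_true : allA 604 = true := by decide

lemma allD_spec {a : ℕ} : ∀ d0, allD a d0 = true → ∀ d, 0 < d → d ≤ d0 → fchk a d = true := by
  intro d0
  induction d0 with
  | zero => intro _ d hd hd0; omega
  | succ n ih =>
    intro h d hd hdn
    rw [allD, Bool.and_eq_true] at h
    rcases Nat.lt_or_ge d (n + 1) with hlt | hge
    · exact ih h.2 d hd (by omega)
    · have : d = n + 1 := by omega
      subst this; exact h.1

lemma allA_spec : ∀ a0, allA a0 = true → ∀ a, 0 < a → a ≤ a0 → allD a 100 = true := by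
  intro a0
  induction a0 with
  | zero => intro _ a ha ha0; omega
  | succ n ih =>
    intro h a ha han
    rw [allA, Bool.and_eq_true] at h
    rcases Nat.lt_or_ge a (n + 1) with hlt | hge
    · exact ih h.2 a ha (by omega)
    · have : a = n + 1 := by omega
      subst this; exact h.1

lemma myc_coloring : IsColoring 2 604 myc := by
  intro i _ _
  unfold myc
  have : vdwN / 2 ^ i % 2 < 2 := Nat.mod_lt _ (by norm_num)
  omega

lemma myc_no_ap : ¬ ContainsAP 7 604 myc := by
  rintro ⟨a, d, ha, hd, hle, hj⟩
  have h6 : (7 : ℕ) - 1 = 6 := rfl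
  rw [h6] at hle hj
  have hd100 : d ≤ 100 := by omega
  have hf : fchk a d = true :=
    allD_spec 100 (allA_spec 604 allA_true a ha (by omega)) d hd hd100
  have e1 := hj 1 (by omega)
  have e2 := hj 2 (by omega)
  have e3 := hj 3 (by omega)
  have e4 := hj 4 (by omega)
  have e5 := hj 5 (by omega)
  have e6 := hj 6 (by omega)
  rw [fchk, e1, e2, e3, e4, e5, e6] at hf
  simp at hf
  omega

open Combinatorics in
/-- A finitary version of van der Waerden for 2 colors and length 7,
derived from the Hales–Jewett theorem. -/
lemma vdw_set_nonempty :
    ∃ m : ℕ, 0 < m ∧ ∀ c : ℕ → ℕ, IsColoring 2 m c → ContainsAP 7 m c := by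
  obtain ⟨ι, ιfin, hι⟩ := Line.exists_mono_in_high_dimension (Fin 7) (Fin 2)
  refine ⟨6 * Fintype.card ι + 1, by omega, ?_⟩
  set m := 6 * Fintype.card ι + 1 with hm
  intro c hc
  obtain ⟨l, c0, hl⟩ :=
    hι (fun v : ι → Fin 7 => if c (1 + ∑ i, (v i : ℕ)) = 1 then (0 : Fin 2) else 1)
  classical
  set s : Finset ι := Finset.univ.filter (fun i => l.idxFun i = none) with hs
  set d := s.card with hdd
  set b := ∑ i ∈ sᶜ, ((l.idxFun i).map (fun y : Fin 7 => (y : ℕ))).getD 0 with hb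
  have hd0 : 0 < d := by
    refine Finset.card_pos.mpr ⟨l.proper.choose, ?_⟩
    rw [hs, Finset.mem_filter]
    exact ⟨Finset.mem_univ _, l.proper.choose_spec⟩
  have hsum : ∀ x : Fin 7, (∑ i, ((l x) i : ℕ)) = d * (x : ℕ) + b := by
    intro x
    rw [← Finset.sum_add_sum_compl s]
    congr 1
    · rw [Finset.sum_congr rfl (fun i hi => ?_), Finset.sum_const, smul_eq_mul]
      rw [hs, Finset.mem_filter] at hi
      show ((l.idxFun i).getD x : ℕ) = (x : ℕ)
      rw [hi.2]
      rfl
    · rw [hb]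
      refine Finset.sum_congr rfl fun i hi => ?_
      rw [hs, Finset.mem_compl, Finset.mem_filter] at hi
      have : l.idxFun i ≠ none := fun hnone => hi ⟨Finset.mem_univ _, hnone⟩
      obtain ⟨y, hy⟩ := Option.ne_none_iff_exists'.mp this
      show ((l.idxFun i).getD x : ℕ) = _
      rw [hy]
      rfl
  have hble : b ≤ 6 * sᶜ.card := by
    rw [hb]
    calc ∑ i ∈ sᶜ, ((l.idxFun i).map (fun y : Fin 7 => (y : ℕ))).getD 0
        ≤ ∑ _i ∈ sᶜ, 6 := by
          refine Finset.sum_le_sum fun i _ => ?_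
          rcases h : l.idxFun i with _ | y
          · simp
          · simpa using Nat.lt_succ_iff.mp y.isLt
      _ = 6 * sᶜ.card := by rw [Finset.sum_const, smul_eq_mul, Nat.mul_comm]
  have hcards : s.card + sᶜ.card = Fintype.card ι := Finset.card_add_card_compl s
  have hbound : 1 + b + 6 * d ≤ m := by omega
  refine ⟨1 + b, d, by omega, hd0, by simpa using hbound, ?_⟩
  have key : ∀ x : Fin 7,
      (if c (1 + b + d * (x : ℕ)) = 1 then (0 : Fin 2) else 1) = c0 := by
    intro x
    have := hl x
    simp only at this
    rw [hsum x] at this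
    rw [show 1 + b + d * (x : ℕ) = 1 + (d * (x : ℕ) + b) by omega]
    exact this
  intro j hj
  have hj6 : j ≤ 6 := hj
  have k1 := key ⟨j, by omega⟩
  have k0 := key ⟨0, by omega⟩
  simp only [Nat.mul_zero, Nat.add_zero] at k0
  have hv1 : 1 ≤ 1 + b + d * j ∧ 1 + b + d * j ≤ m := by
    have : d * j ≤ d * 6 := Nat.mul_le_mul_left d hj6
    omega
  have hv0 : 1 ≤ 1 + b ∧ 1 + b ≤ m := by omega
  have hc1 := hc (1 + b + d * j) hv1.1 hv1.2
  have hc0 := hc (1 + b) hv0.1 hv0.2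
  have hxj : ((⟨j, by omega⟩ : Fin 7) : ℕ) = j := rfl
  rw [hxj] at k1
  rw [show (1 : ℕ) + b + j * d = 1 + b + d * j by ring]
  by_cases e1 : c (1 + b + d * j) = 1 <;> by_cases e0 : c (1 + b) = 1
  · rw [e1, e0]
  · rw [if_pos e1] at k1; rw [if_neg e0] at k0
    exact absurd (k1.trans k0.symm) (by decide)
  · rw [if_neg e1] at k1; rw [if_pos e0] at k0
    exact absurd (k1.trans k0.symm) (by decide)
  · omega

theorem vdW_two_seven_gt :
    vdW 2 7 > 604 ∧
    ∃ c : ℕ → ℕ, IsColoring 2 604 c ∧ ¬ ContainsAP 7 604 c := by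
  refine ⟨?_, myc, myc_coloring, myc_no_ap⟩
  obtain ⟨m, hm⟩ := vdw_set_nonempty
  have hne : {m : ℕ | 0 < m ∧ ∀ c : ℕ → ℕ, IsColoring 2 m c → ContainsAP 7 m c}.Nonempty :=
    ⟨m, hm⟩
  have hmem := Nat.sInf_mem hne
  rw [vdW]
  by_contra hle
  push_neg at hle
  obtain ⟨hpos, hall⟩ := hmem
  have hcol' : IsColoring 2 (sInf {m : ℕ | 0 < m ∧
      ∀ c : ℕ → ℕ, IsColoring 2 m c → ContainsAP 7 m c}) myc :=
    fun i h1 h2 => myc_coloring i h1 (le_trans h2 hle)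
  obtain ⟨a, d, ha, hd, hb, hmo⟩ := hall myc hcol'
  exact myc_no_ap ⟨a, d, ha, hd, le_trans hb hle, hmo⟩
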